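/- Let k ≥ 2 and let χ1,…,χk be primitive characters mod 8 such that χ1⋯χk is induced by the primitive character mod 4. Then J_2(χ1,…,χk,2^3) = 2^{(3(k−1)+1)/2} · (−i) · ω^{k − (χ1(−1)+⋯+χk(−1))}. -/

import Mathlib

/-!
Write `τ` for the basis element `δ₁` of the group algebra `ℂ[ℤ/8]`. The Jacobi sum `J_B` is the
coefficient of `δ_B` in `∏ᵢ ∑ₓ χᵢ(x) δₓ`. A primitive character mod 8 has `χ(5) = -1`, so its
element is `A = τ - τ³ - τ⁵ + τ⁷` if `χ` is even and `B = τ + τ³ - τ⁵ - τ⁷` if `χ` is odd.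
Evaluating `∏ᵢ χᵢ = ψ` at `-1` and at `5` shows that the numbers `2a + 1` and `2b + 1` of even
and of odd `χᵢ` are both odd. Since `τ⁸ = 1`, with `e = 1 - τ⁴` we have `A² = 4e`, `B² = -4e`,
`AB = 4(τ² - τ⁶)` and `e(τ² - τ⁶) = 2(τ² - τ⁶)`, whence
`A^(2a+1) B^(2b+1) = (-1)^b 2^(3(a+b)+2) (τ² - τ⁶)`. Its coefficient at `δ₂` matches the
right-hand side because `k - ∑ᵢ χᵢ(-1) = 2(2b + 1)` and `ω² = i`.
-/

open Complex

/-- The generalized Jacobi sum `J_B(χ₁,…,χ_k, q)`. -/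
noncomputable def Jsum {q : ℕ} [NeZero q] {k : ℕ}
    (χ : Fin k → DirichletCharacter ℂ q) (B : ZMod q) : ℂ :=
  ∑ x : Fin k → ZMod q, if (∑ i, x i) = B then ∏ i, χ i (x i) else 0

/-- `ω = e^{πi/4}`. -/
noncomputable def omega : ℂ := Complex.exp (Real.pi * Complex.I / 4)

open Finset AddMonoidAlgebra

noncomputable def AddMonoidAlgebra.ofFun {R G : Type*} [Semiring R] [Fintype G] (f : G → R) :
    AddMonoidAlgebra R G :=
  ∑ x, single x (f x)

theorem Jsum_eq_coeff_prod_ofFun {q : ℕ} [NeZero q] {k : ℕ}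
    (χ : Fin k → DirichletCharacter ℂ q) (B : ZMod q) :
    Jsum χ B = (∏ i, ofFun (χ i)).coeff B := by
  simp only [Jsum, ofFun, prod_univ_sum, Fintype.piFinset_univ, prod_single, coeff_sum,
    coeff_single, Finsupp.finsetSum_apply, Finsupp.single_apply]

theorem MulChar.prod_apply_of_isUnit {ι R R' : Type*} [CommMonoid R] [CommMonoidWithZero R']
    (s : Finset ι) (χ : ι → MulChar R R') {x : R} (hx : IsUnit x) :
    (∏ i ∈ s, χ i) x = ∏ i ∈ s, χ i x := by
  induction s using Finset.cons_induction with
  | empty => simp [MulChar.one_apply hx]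
  | cons i s hi ih => rw [prod_cons, prod_cons, MulChar.mul_apply, ih]

namespace DirichletCharacter

variable {R : Type*} [CommRing R]

theorem prod_apply_intCast_of_prod_eq_changeLevel {ι : Type*} {s : Finset ι} {m n : ℕ}
    {χ : ι → DirichletCharacter R n} {ψ : DirichletCharacter R m} {hmn : m ∣ n}
    (h : ∏ i ∈ s, χ i = changeLevel hmn ψ) {a : ℤ} (ha : IsCoprime a n) :
    ∏ i ∈ s, χ i a = ψ a := by
  have hunit : IsUnit (a : ZMod n) := ZMod.coe_unitOfIsCoprime a ha ▸ Units.isUnit _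
  rw [← MulChar.prod_apply_of_isUnit s χ hunit, h, changeLevel_eq_cast_of_dvd' ψ hmn ha]

theorem IsPrimitive.not_factorsThrough {n d : ℕ} {χ : DirichletCharacter R n}
    (hχ : χ.IsPrimitive) (hd : d < n) : ¬ χ.FactorsThrough d := fun h =>
  (hd.trans_eq hχ.symm).not_ge (Nat.sInf_le ((mem_conductorSet_iff χ).mpr h))

variable [NoZeroDivisors R]

theorem apply_neg_one_eq_ite {n : ℕ} (ψ : DirichletCharacter R n) [Decidable ψ.Even] :
    ψ (-1) = if ψ.Even then 1 else -1 := by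
  split_ifs with h
  exacts [h, ψ.even_or_odd.resolve_left h]

theorem sum_apply_neg_one {ι : Type*} {n : ℕ} (s : Finset ι) (χ : ι → DirichletCharacter R n)
    [DecidablePred fun i => (χ i).Even] :
    ∑ i ∈ s, χ i (-1) = #{i ∈ s | (χ i).Even} - #{i ∈ s | ¬(χ i).Even} := by
  simp [apply_neg_one_eq_ite, sum_ite, sub_eq_add_neg]

theorem prod_apply_neg_one {ι : Type*} {n : ℕ} (s : Finset ι) (χ : ι → DirichletCharacter R n)
    [DecidablePred fun i => (χ i).Even] :
    ∏ i ∈ s, χ i (-1) = (-1) ^ #{i ∈ s | ¬(χ i).Even} := by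
  simp [apply_neg_one_eq_ite, prod_ite]

theorem odd_of_isPrimitive_four {ψ : DirichletCharacter R 4} (hψ : ψ.IsPrimitive) : ψ.Odd := by
  refine ψ.even_or_odd.resolve_left fun heven => hψ.not_factorsThrough (d := 2) (by norm_num) ?_
  refine (factorsThrough_iff_ker_unitsMap (by norm_num)).mpr fun u _ => ?_
  rw [MonoidHom.mem_ker, Units.ext_iff, MulChar.coe_toUnitHom, Units.val_one]
  rcases (by decide : ∀ u : (ZMod 4)ˣ, (u : ZMod 4) = 1 ∨ (u : ZMod 4) = -1) u with hu | hu
  · rw [hu, map_one]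
  · rw [hu, heven]

theorem apply_five_of_isPrimitive_eight {χ : DirichletCharacter R 8} (hχ : χ.IsPrimitive) :
    χ 5 = -1 := by
  have hsq : χ 5 * χ 5 = 1 := by rw [← map_mul, show (5 * 5 : ZMod 8) = 1 by decide, map_one]
  refine (mul_self_eq_one_iff.mp hsq).resolve_left fun h5 =>
    hχ.not_factorsThrough (d := 4) (by norm_num) ?_
  refine (factorsThrough_iff_ker_unitsMap (by norm_num)).mpr fun u hu => ?_
  rw [MonoidHom.mem_ker] at hu ⊢
  rw [Units.ext_iff, MulChar.coe_toUnitHom, Units.val_one]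
  rcases (by decide : ∀ u : (ZMod 8)ˣ, ZMod.unitsMap (⟨2, rfl⟩ : 4 ∣ 8) u = 1 →
      (u : ZMod 8) = 1 ∨ (u : ZMod 8) = 5) u hu with hu | hu
  · rw [hu, map_one]
  · rw [hu, h5]

end DirichletCharacter

section PowEightEqOne

variable {R : Type*} [CommRing R] {s : R}

theorem one_sub_pow_four_pow_mul (hs : s ^ 8 = 1) (n : ℕ) :
    (1 - s ^ 4) ^ n * (s ^ 2 - s ^ 6) = 2 ^ n * (s ^ 2 - s ^ 6) := by
  induction n with
  | zero => simp
  | succ n ih => linear_combination ((1 - s ^ 4) ^ n * s ^ 2) * hs + 2 * ih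

theorem pow_mul_pow_of_pow_eight_eq_one (hs : s ^ 8 = 1) (a b : ℕ) :
    (s - s ^ 3 - s ^ 5 + s ^ 7) ^ (2 * a + 1) * (s + s ^ 3 - s ^ 5 - s ^ 7) ^ (2 * b + 1) =
      ((-1) ^ b * 2 ^ (3 * (a + b) + 2) : ℤ) • (s ^ 2 - s ^ 6) := by
  set A := s - s ^ 3 - s ^ 5 + s ^ 7
  set B := s + s ^ 3 - s ^ 5 - s ^ 7
  have hA : A ^ 2 = 4 * (1 - s ^ 4) := by linear_combination (s ^ 6 - 2 * s ^ 4 - s ^ 2 + 4) * hs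
  have hB : B ^ 2 = -4 * (1 - s ^ 4) := by linear_combination (s ^ 6 + 2 * s ^ 4 - s ^ 2 - 4) * hs
  have hAB : A * B = 4 * (s ^ 2 - s ^ 6) := by linear_combination (3 * s ^ 2 - s ^ 6) * hs
  clear_value A B
  have h2 : (4 : R) ^ (a + b + 1) * 2 ^ (a + b) = 2 ^ (3 * (a + b) + 2) := by
    rw [show (4 : R) = 2 ^ 2 by norm_num, ← pow_mul, ← pow_add]
    ring
  calc A ^ (2 * a + 1) * B ^ (2 * b + 1) = (A ^ 2) ^ a * (B ^ 2) ^ b * (A * B) := by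
        rw [pow_succ, pow_succ, pow_mul, pow_mul]; ring
    _ = (-1) ^ b * 4 ^ (a + b + 1) * ((1 - s ^ 4) ^ (a + b) * (s ^ 2 - s ^ 6)) := by
      rw [hA, hB, hAB, neg_mul, neg_pow, mul_pow, mul_pow, pow_add]; ring
    _ = _ := by
      rw [one_sub_pow_four_pow_mul hs, zsmul_eq_mul]; push_cast; rw [← h2]; ring

end PowEightEqOne

local notation "τ" => single (1 : ZMod 8) (1 : ℂ)

theorem single_one_pow_zmod_eight (n : ℕ) : τ ^ n = single (n : ZMod 8) 1 := by
  rw [single_pow, one_pow, nsmul_one]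

theorem coeff_two_zsmul_pow_two_sub_pow_six (c : ℤ) : (c • (τ ^ 2 - τ ^ 6)).coeff 2 = c := by
  rw [coeff_smul_apply, coeff_sub, single_one_pow_zmod_eight, single_one_pow_zmod_eight]
  simp +decide [coeff_single]

theorem ofFun_eq_of_level_eight (χ : DirichletCharacter ℂ 8) :
    ofFun χ = single 1 1 + single 3 (χ 3) + single 5 (χ 5) + single 7 (χ (-1)) := by
  have h0 : χ 0 = 0 := χ.map_nonunit (by decide)
  have h2 : χ 2 = 0 := χ.map_nonunit (by decide)
  have h4 : χ 4 = 0 := χ.map_nonunit (by decide)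
  have h6 : χ 6 = 0 := χ.map_nonunit (by decide)
  rw [ofFun, show (univ : Finset (ZMod 8)) = {0, 1, 2, 3, 4, 5, 6, 7} from rfl,
    show (-1 : ZMod 8) = 7 from rfl]
  simp +decide [h0, h2, h4, h6]
  abel

theorem ofFun_eq_of_isPrimitive_eight_of_even {χ : DirichletCharacter ℂ 8} (hχ : χ.IsPrimitive)
    (he : χ.Even) : ofFun χ = τ - τ ^ 3 - τ ^ 5 + τ ^ 7 := by
  have h5 := DirichletCharacter.apply_five_of_isPrimitive_eight hχ
  have h3 : χ 3 = -1 := by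
    rw [show (3 : ZMod 8) = -1 * 5 from rfl, map_mul, h5, he, mul_neg_one]
  rw [ofFun_eq_of_level_eight, h3, h5, he]
  simp only [single_one_pow_zmod_eight, Nat.cast_ofNat, single_neg]
  abel

theorem ofFun_eq_of_isPrimitive_eight_of_odd {χ : DirichletCharacter ℂ 8} (hχ : χ.IsPrimitive)
    (ho : χ.Odd) : ofFun χ = τ + τ ^ 3 - τ ^ 5 - τ ^ 7 := by
  have h5 := DirichletCharacter.apply_five_of_isPrimitive_eight hχ
  have h3 : χ 3 = 1 := by
    rw [show (3 : ZMod 8) = -1 * 5 from rfl, map_mul, h5, ho, neg_one_mul, neg_neg]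
  rw [ofFun_eq_of_level_eight, h3, h5, ho]
  simp only [single_one_pow_zmod_eight, Nat.cast_ofNat, single_neg]
  abel

theorem prod_ofFun_of_isPrimitive_eight {k : ℕ} (χ : Fin k → DirichletCharacter ℂ 8)
    (hχ : ∀ i, (χ i).IsPrimitive) [DecidablePred fun i => (χ i).Even] :
    ∏ i, ofFun (χ i) = (τ - τ ^ 3 - τ ^ 5 + τ ^ 7) ^ #{i | (χ i).Even} *
      (τ + τ ^ 3 - τ ^ 5 - τ ^ 7) ^ #{i | ¬(χ i).Even} := by
  rw [← prod_filter_mul_prod_filter_not univ fun i => (χ i).Even,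
    prod_congr rfl fun i hi => ofFun_eq_of_isPrimitive_eight_of_even (hχ i) (mem_filter.mp hi).2,
    prod_congr rfl fun i hi => ofFun_eq_of_isPrimitive_eight_of_odd (hχ i)
      ((χ i).even_or_odd.resolve_left (mem_filter.mp hi).2),
    prod_const, prod_const]

theorem odd_card_even_and_odd_card_not_even {k : ℕ} {χ : Fin k → DirichletCharacter ℂ 8}
    (hχ : ∀ i, (χ i).IsPrimitive) {ψ : DirichletCharacter ℂ 4} (hψ : ψ.IsPrimitive)
    (h : ∏ i, χ i = DirichletCharacter.changeLevel (by norm_num : 4 ∣ 8) ψ) [DecidablePred fun i => (χ i).Even] :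
    Odd #{i | (χ i).Even} ∧ Odd #{i | ¬(χ i).Even} := by
  have hodd : (-1 : ℂ) ^ #{i | ¬(χ i).Even} = -1 := by
    have := DirichletCharacter.prod_apply_intCast_of_prod_eq_changeLevel h (a := -1)
      isCoprime_one_left.neg_left
    push_cast at this
    rw [← DirichletCharacter.prod_apply_neg_one, this,
      DirichletCharacter.odd_of_isPrimitive_four hψ]
  have heven : (-1 : ℂ) ^ k = 1 := by
    have := DirichletCharacter.prod_apply_intCast_of_prod_eq_changeLevel h (a := 5)
      (by norm_num [Int.isCoprime_iff_gcd_eq_one])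
    push_cast at this
    rwa [prod_congr rfl fun i _ => DirichletCharacter.apply_five_of_isPrimitive_eight (hχ i),
      prod_const, card_univ, Fintype.card_fin, show (5 : ZMod 4) = 1 from rfl, map_one] at this
  have hO := (neg_one_pow_eq_neg_one_iff_odd (by norm_num)).mp hodd
  have hk := (neg_one_pow_eq_one_iff_even (by norm_num)).mp heven
  rw [← Fintype.card_fin k, ← card_univ,
    ← card_filter_add_card_filter_not (s := univ) fun i => (χ i).Even, Nat.even_add'] at hk
  exact ⟨hk.mpr hO, hO⟩

theorem omega_sq : omega ^ 2 = I := by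
  rw [omega, ← exp_nat_mul]
  convert exp_pi_div_two_mul_I using 2
  push_cast
  ring

theorem stmt6 {k : ℕ}
    (χ : Fin k → DirichletCharacter ℂ (2 ^ 3))
    (hprim : ∀ i, (χ i).IsPrimitive)
    -- χ₁⋯χ_k is induced by the primitive character ψ mod 4
    (ψ : DirichletCharacter ℂ 4) (hψ : ψ.IsPrimitive)
    (hind : ∏ i, χ i = DirichletCharacter.changeLevel (by norm_num : (4:ℕ) ∣ 2 ^ 3) ψ) :
    Jsum χ ((2 : ℕ) : ZMod (2 ^ 3)) =
      (Real.sqrt 2 : ℂ) ^ (3 * (k - 1) + 1) * (-Complex.I) *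
        omega ^ ((k : ℂ) - ∑ i, χ i (-1)) := by
  classical
  obtain ⟨⟨a, ha⟩, ⟨b, hb⟩⟩ := odd_card_even_and_odd_card_not_even (χ := χ) hprim hψ hind
  have hk : k = 2 * a + 2 * b + 2 := by
    have := card_filter_add_card_filter_not (s := univ) fun i => (χ i).Even
    rw [card_univ, Fintype.card_fin] at this
    omega
  have hexp : (k : ℂ) - ∑ i, χ i (-1) = ((2 * (2 * b + 1) : ℕ) : ℂ) := by
    rw [DirichletCharacter.sum_apply_neg_one, ha, hb, hk]
    push_cast
    ring
  have hsqrt : ((√2 : ℝ) : ℂ) ^ (3 * (k - 1) + 1) = 2 ^ (3 * (a + b) + 2) := by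
    rw [show 3 * (k - 1) + 1 = 2 * (3 * (a + b) + 2) by omega, pow_mul, ← ofReal_pow,
      Real.sq_sqrt zero_le_two, ofReal_ofNat]
  rw [Jsum_eq_coeff_prod_ofFun, prod_ofFun_of_isPrimitive_eight χ hprim, ha, hb,
    pow_mul_pow_of_pow_eight_eq_one (by rw [single_one_pow_zmod_eight]; rfl), Nat.cast_ofNat,
    coeff_two_zsmul_pow_two_sub_pow_six, hexp, cpow_natCast, pow_mul, omega_sq, hsqrt,
    pow_succ I, pow_mul I, I_sq]
  push_cast
  linear_combination ((-1) ^ b * 2 ^ (3 * (a + b) + 2) : ℂ) * I_mul_I
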